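/- arXiv:1605.03546 — 3 statements merged into one kernel-verified Lean document; each statement's English description precedes it below -/
import Mathlib

section
/- There exists a family of switch graphs G_n with n+2 vertices, an origin o, and a destination d, such that the run from o terminates at d but traverses at least 2^n edges. -/
open scoped Classical

/-- A switch graph: every vertex has an even successor `s0 v` and an odd successor `s1 v`. -/
structure SwitchGraph (V : Type) where
  s0 : V → V
  s1 : V → V

namespace SwitchGraph

variable {V : Type}

/-- The successor of `v` along the edge of parity `b` (`false` = even, `true` = odd). -/
def succ (G : SwitchGraph V) (v : V) (b : Bool) : V :=
  if b then G.s1 v else G.s0 v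

/-- One step of the run: move to the currently active successor and flip the switch. -/
def step [DecidableEq V] (G : SwitchGraph V) (p : V × (V → Bool)) : V × (V → Bool) :=
  (G.succ p.1 (p.2 p.1), Function.update p.2 p.1 (!p.2 p.1))

/-- The state of the run after `n` steps, starting at `o` with all switches even,
stopping (freezing) upon reaching `d`. -/
def run [DecidableEq V] (G : SwitchGraph V) (o d : V) (n : ℕ) : V × (V → Bool) :=
  (fun p => if p.1 = d then p else G.step p)^[n] (o, fun _ => false)

/-- The run from `o` terminates at `d`. -/
def Terminates [DecidableEq V] (G : SwitchGraph V) (o d : V) : Prop :=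
  ∃ n, (G.run o d n).1 = d

/-- Number of traversals of the outgoing edge of `v` of parity `b` during
the first `N` steps of the run. -/
def traversals [DecidableEq V] (G : SwitchGraph V) (o d : V) (N : ℕ) (v : V) (b : Bool) : ℕ :=
  ((Finset.range N).filter
    (fun n => (G.run o d n).1 = v ∧ v ≠ d ∧ (G.run o d n).2 v = b)).card

/-- Total weight on edges leaving `v`. -/
def outflow {M : Type} [AddCommMonoid M] (x : V → Bool → M) (v : V) : M :=
  x v false + x v true

/-- Total weight on edges entering `v`. -/
def inflow [Fintype V] [DecidableEq V] (G : SwitchGraph V) {M : Type} [AddCommMonoid M]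
    (x : V → Bool → M) (v : V) : M :=
  ∑ u : V, ∑ b : Bool, if G.succ u b = v then x u b else 0

/-- A switching flow: flow conservation of value 1 from `o` to `d`, together with the
balancing condition `x v true ≤ x v false ≤ x v true + 1` at every vertex. -/
def IsSwitchingFlow [Fintype V] [DecidableEq V] (G : SwitchGraph V) (o d : V)
    (x : V → Bool → ℕ) : Prop :=
  (∀ v, outflow x v + (if v = d then 1 else 0) = G.inflow x v + (if v = o then 1 else 0)) ∧
  (∀ v, x v true ≤ x v false ∧ x v false ≤ x v true + 1)

/-- The edge relation of the underlying directed graph `(V, E)`. -/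
def stepRel (G : SwitchGraph V) (a b : V) : Prop :=
  G.s0 a = b ∨ G.s1 a = b

/-- A dead end: a vertex with no directed path to `d` in `(V, E)`. -/
def DeadEnd (G : SwitchGraph V) (d w : V) : Prop :=
  ¬ Relation.ReflTransGen G.stepRel w d

/-- There is a directed walk of length `k` from `w` to `d` in `(V, E)`. -/
def Chain (G : SwitchGraph V) (w d : V) (k : ℕ) : Prop :=
  ∃ f : ℕ → V, f 0 = w ∧ f k = d ∧ ∀ i < k, G.stepRel (f i) (f (i + 1))

end SwitchGraph

open SwitchGraph

/-!
On `BinaryCounter.graph n` the switches of `v₁, …, vₙ` hold the bits of a counter: each pass from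
`o` clears the trailing odd switches, sets the first even one and returns to `o`, so `d` is only
reached when the counter overflows. Rather than following the counter, we use a potential on states
that grows by exactly one at every step. Since there are finitely many states, the run terminates,
and every state at `d` has potential at least `3 · 2 ^ n - 2 ≥ 2 ^ n`.
-/

namespace SwitchGraph

variable {V : Type} [DecidableEq V]

theorem run_succ (G : SwitchGraph V) (o d : V) (m : ℕ) :
    G.run o d (m + 1) =
      if (G.run o d m).1 = d then G.run o d m else G.step (G.run o d m) :=
  Function.iterate_succ_apply' _ _ _

theorem step_mk (G : SwitchGraph V) (v : V) (f : V → Bool) :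
    G.step (v, f) = (G.succ v (f v), Function.update f v (!f v)) :=
  rfl

structure IsStepCount (G : SwitchGraph V) (o d : V) (Φ : V × (V → Bool) → ℤ) : Prop where
  init : Φ (o, fun _ => false) = 0
  step : ∀ s : V × (V → Bool), s.1 ≠ d → Φ (G.step s) = Φ s + 1

namespace IsStepCount

variable {G : SwitchGraph V} {o d : V} {Φ : V × (V → Bool) → ℤ}

theorem run_le (hΦ : G.IsStepCount o d Φ) (m : ℕ) : Φ (G.run o d m) ≤ m := by
  induction m with
  | zero => simp [run, hΦ.init]
  | succ m ih =>
    rw [run_succ]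
    split_ifs with hd
    · push_cast; linarith
    · rw [hΦ.step _ hd]; push_cast; linarith

theorem run_eq_of_ne (hΦ : G.IsStepCount o d Φ) (m : ℕ) (hm : (G.run o d m).1 ≠ d) :
    Φ (G.run o d m) = m := by
  induction m with
  | zero => simp [run, hΦ.init]
  | succ m ih =>
    rw [run_succ] at hm ⊢
    split_ifs at hm ⊢ with hd
    · exact absurd hd hm
    · rw [hΦ.step _ hd, ih hd]; push_cast; ring

theorem terminates [Finite V] (hΦ : G.IsStepCount o d Φ) : G.Terminates o d := by
  obtain ⟨B, hB⟩ := (Set.finite_range Φ).bddAbove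
  refine ⟨B.toNat + 1, by_contra fun hd => ?_⟩
  have hle := hB (Set.mem_range_self (G.run o d (B.toNat + 1)))
  rw [hΦ.run_eq_of_ne _ hd] at hle
  omega

theorem run_ne_of_lt (hΦ : G.IsStepCount o d Φ) {L : ℤ}
    (hL : ∀ s : V × (V → Bool), s.1 = d → L ≤ Φ s) (m : ℕ) (hm : (m : ℤ) < L) :
    (G.run o d m).1 ≠ d :=
  fun hd => by linarith [hL _ hd, hΦ.run_le m]

end IsStepCount

end SwitchGraph

theorem Fintype.sum_ite_update_not {V M : Type} [Fintype V] [DecidableEq V] [AddCommGroup M]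
    (f : V → Bool) (w : V → M) (v : V) :
    ∑ u, (if Function.update f v (!f v) u then w u else 0) =
      ∑ u, (if f u then w u else 0) + if f v then -w v else w v := by
  have hrest : ∀ u ∈ Finset.univ.erase v,
      (if Function.update f v (!f v) u then w u else 0) = if f u then w u else 0 := fun u hu => by
    rw [Function.update_of_ne (Finset.ne_of_mem_erase hu)]
  rw [← Finset.add_sum_erase _ _ (Finset.mem_univ v), ← Finset.add_sum_erase _ _ (Finset.mem_univ v),
    Finset.sum_congr rfl hrest, Function.update_self]
  cases f v <;> simp only [Bool.not_false, Bool.not_true, Bool.false_eq_true, if_true, if_false] <;> abel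

namespace BinaryCounter

/-- The vertices are `o = 0`, `vᵢ = i` and `d = n + 1`. From `o` both edges lead to `v₁`; from
`vᵢ` the even edge returns to `o` and the odd one advances to `vᵢ₊₁`. The edges leaving `d` never
matter, since the run stops there. -/
def graph (n : ℕ) : SwitchGraph (Fin (n + 2)) where
  s0 v := if v = 0 then 1 else 0
  s1 v := v + 1

/-- `level (k + 1)` is the number of steps the run needs to first reach `vₖ₊₁`, and
`bitWeight (k + 1) = level (k + 1) + 1` the number it needs to first set the switch of `vₖ₊₁`.
Reaching `vₖ₊₂` means reaching `vₖ₊₁`, returning to `o`, reaching `vₖ₊₁` again and advancing,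
whence `level (k + 2) = 2 * level (k + 1) + 2`. -/
def level : ℕ → ℤ
  | 0 => 0
  | k + 1 => 3 * 2 ^ k - 2

def bitWeight : ℕ → ℤ
  | 0 => 0
  | k + 1 => 3 * 2 ^ k - 1

theorem bitWeight_nonneg (k : ℕ) : 0 ≤ bitWeight k := by
  cases k with
  | zero => rfl
  | succ k =>
    have : (1 : ℤ) ≤ 2 ^ k := one_le_pow₀ (by norm_num)
    simp only [bitWeight]; linarith

def potential (n : ℕ) (s : Fin (n + 2) × (Fin (n + 2) → Bool)) : ℤ :=
  ∑ v, (if s.2 v then bitWeight v else 0) + level s.1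

theorem graph_succ_zero (n : ℕ) (b : Bool) : (graph n).succ 0 b = 1 := by
  cases b <;> simp [graph, succ]

theorem graph_succ_false {n : ℕ} {v : Fin (n + 2)} (hv : v ≠ 0) : (graph n).succ v false = 0 := by
  simp [graph, succ, hv]

theorem graph_succ_true (n : ℕ) (v : Fin (n + 2)) : (graph n).succ v true = v + 1 := rfl

theorem potential_step (n : ℕ) (s : Fin (n + 2) × (Fin (n + 2) → Bool))
    (hs : s.1 ≠ Fin.last (n + 1)) : potential n ((graph n).step s) = potential n s + 1 := by
  obtain ⟨v, f⟩ := s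
  rw [step_mk]
  simp only [potential, Fintype.sum_ite_update_not]
  obtain rfl | hv := eq_or_ne v 0
  · rw [graph_succ_zero]
    cases f 0 <;> simp [bitWeight, level]
  obtain ⟨k, hk⟩ : ∃ k, v.val = k + 1 := Nat.exists_eq_add_one.mpr (Fin.pos_iff_ne_zero.mpr hv)
  cases f v
  · rw [graph_succ_false hv, Fin.val_zero, hk]
    simp only [bitWeight, level, Bool.false_eq_true, if_false]; ring
  · have hnext : (v + 1).val = k + 2 := by
      rw [Fin.val_add_one_of_lt (Fin.lt_last_iff_ne_last.mpr hs), hk]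
    rw [graph_succ_true, hnext, hk]
    simp only [bitWeight, level, if_true, pow_succ]; ring

theorem isStepCount_potential (n : ℕ) : (graph n).IsStepCount 0 (Fin.last (n + 1)) (potential n) where
  init := by simp [potential, level]
  step := potential_step n

theorem potential_ge_of_eq_last (n : ℕ) (s : Fin (n + 2) × (Fin (n + 2) → Bool))
    (hs : s.1 = Fin.last (n + 1)) : 3 * 2 ^ n - 2 ≤ potential n s := by
  have hbits : 0 ≤ ∑ v, (if s.2 v then bitWeight v else 0) :=
    Finset.sum_nonneg fun v _ => by split_ifs <;> simp [bitWeight_nonneg]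
  rw [potential, hs, Fin.val_last, level]
  linarith

end BinaryCounter

/-- There is a family of switch graphs with `n + 2` vertices on which the run terminates
but traverses at least `2^n` edges. -/
theorem stmt2 (n : ℕ) :
    ∃ (G : SwitchGraph (Fin (n + 2))) (o d : Fin (n + 2)),
      G.Terminates o d ∧ ∀ m < 2 ^ n, (G.run o d m).1 ≠ d := by
  have hΦ := BinaryCounter.isStepCount_potential n
  refine ⟨BinaryCounter.graph n, 0, Fin.last (n + 1), hΦ.terminates, fun m hm => ?_⟩
  refine hΦ.run_ne_of_lt (BinaryCounter.potential_ge_of_eq_last n) m ?_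
  have hpow : (1 : ℤ) ≤ 2 ^ n := one_le_pow₀ (by norm_num)
  have hm' : (m : ℤ) < 2 ^ n := by exact_mod_cast hm
  linarith
end

section
/- If the run from o terminates at d, then the run profile — the function x : E → ℕ assigning to each edge the number of times it is traversed during the run — is a switching flow: it satisfies flow conservation with source o and sink d of value 1, and for every vertex v, 0 ≤ x(v, s₁(v)) ≤ x(v, s₀(v)) ≤ x(v, s₁(v)) + 1. -/
open scoped Classical

/-!
Each step of the run puts one unit on the edge leaving the current vertex through its active
switch, moves the token along that edge and flips the switch. Two invariants survive every step:
the profile is a unit flow from `o` to the current position of the token, and the switch at each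
vertex `v` records the parity of the departures from `v`, i.e. `x v false = x v true + [switch v]`.
When the run stops, the token is at `d`, and the parity invariant is the balancing condition.
-/

namespace SwitchGraph

variable {V : Type}

section Flow

variable {M : Type} [AddCommMonoid M]

lemma outflow_add (x y : V → Bool → M) (v : V) :
    outflow (x + y) v = outflow x v + outflow y v :=
  add_add_add_comm _ _ _ _

lemma outflow_single [DecidableEq V] (u : V) (β : Bool) (c : M) (v : V) :
    outflow (Pi.single u (Pi.single β c)) v = if v = u then c else 0 := by
  by_cases h : v = u
  · subst h
    cases β <;> simp [outflow]
  · simp [outflow, h]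

variable [Fintype V] [DecidableEq V] (G : SwitchGraph V)

lemma inflow_add (x y : V → Bool → M) (v : V) :
    G.inflow (x + y) v = G.inflow x v + G.inflow y v := by
  simp only [inflow, Pi.add_apply, ← Finset.sum_add_distrib, ← ite_add_zero]

lemma inflow_single (u : V) (β : Bool) (c : M) (v : V) :
    G.inflow (Pi.single u (Pi.single β c)) v = if G.succ u β = v then c else 0 := by
  rw [inflow, Fintype.sum_eq_single u, Fintype.sum_eq_single β]
  · simp
  · intro b hb
    simp [hb]
  · intro w hw
    simp [hw]

end Flow

section Invariants

variable [DecidableEq V]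

def IsUnitFlow [Fintype V] (G : SwitchGraph V) (o t : V) (x : V → Bool → ℕ) : Prop :=
  ∀ v, outflow x v + (if v = t then 1 else 0) = G.inflow x v + (if v = o then 1 else 0)

def RecordsParity (s : V → Bool) (x : V → Bool → ℕ) : Prop :=
  ∀ v, x v false = x v true + (s v).toNat

lemma IsUnitFlow.add_single [Fintype V] {G : SwitchGraph V} {o u : V} {x : V → Bool → ℕ}
    (h : G.IsUnitFlow o u x) (β : Bool) :
    G.IsUnitFlow o (G.succ u β) (x + Pi.single u (Pi.single β 1)) := by
  intro v
  have hv := h v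
  rw [outflow_add, inflow_add, outflow_single, inflow_single]
  simp only [eq_comm (a := G.succ u β)]
  split_ifs at hv ⊢ <;> omega

lemma RecordsParity.flip {s : V → Bool} {x : V → Bool → ℕ} (h : RecordsParity s x) (u : V) :
    RecordsParity (Function.update s u (!s u)) (x + Pi.single u (Pi.single (s u) 1)) := by
  intro v
  have hv := h v
  by_cases hvu : v = u
  · subst hvu
    cases hs : s v <;> simp [hs] at hv ⊢ <;> omega
  · simp [hvu, hv]

end Invariants

section Run

variable [DecidableEq V] (G : SwitchGraph V) (o d : V) (n : ℕ)

lemma run_succ_of_eq (h : (G.run o d n).1 = d) : G.run o d (n + 1) = G.run o d n := by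
  rw [run, Function.iterate_succ_apply', ← run, if_pos h]

lemma run_succ_of_ne (h : (G.run o d n).1 ≠ d) :
    G.run o d (n + 1) = G.step (G.run o d n) := by
  rw [run, Function.iterate_succ_apply', ← run, if_neg h]

lemma traversals_zero : G.traversals o d 0 = 0 := by
  ext v b
  simp [traversals]

lemma traversals_succ (v : V) (b : Bool) :
    G.traversals o d (n + 1) v b = G.traversals o d n v b +
      if (G.run o d n).1 = v ∧ v ≠ d ∧ (G.run o d n).2 v = b then 1 else 0 := by
  rw [traversals, Finset.range_add_one, Finset.filter_insert]
  split_ifs with h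
  · rw [Finset.card_insert_of_notMem (by simp), traversals]
  · rw [traversals, add_zero]

lemma traversals_succ_of_eq (h : (G.run o d n).1 = d) :
    G.traversals o d (n + 1) = G.traversals o d n := by
  ext v b
  rw [traversals_succ, if_neg (by rintro ⟨rfl, hv, -⟩; exact hv h), add_zero]

lemma traversals_succ_of_ne (h : (G.run o d n).1 ≠ d) :
    G.traversals o d (n + 1) = G.traversals o d n +
      Pi.single (G.run o d n).1 (Pi.single ((G.run o d n).2 (G.run o d n).1) 1) := by
  ext v b
  rw [traversals_succ, Pi.add_apply, Pi.add_apply]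
  congr 1
  by_cases hv : v = (G.run o d n).1
  · subst hv
    by_cases hb : b = (G.run o d n).2 (G.run o d n).1 <;> simp [hb, h, eq_comm]
  · simp [hv, Ne.symm hv]

lemma isUnitFlow_traversals [Fintype V] :
    G.IsUnitFlow o (G.run o d n).1 (G.traversals o d n) := by
  induction n with
  | zero =>
    rw [traversals_zero]
    show G.IsUnitFlow o o 0
    intro v
    simp [outflow, inflow]
  | succ n ih =>
    by_cases h : (G.run o d n).1 = d
    · rwa [run_succ_of_eq _ _ _ _ h, traversals_succ_of_eq _ _ _ _ h]
    · rw [run_succ_of_ne _ _ _ _ h, traversals_succ_of_ne _ _ _ _ h]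
      exact ih.add_single _

lemma recordsParity_traversals : RecordsParity (G.run o d n).2 (G.traversals o d n) := by
  induction n with
  | zero =>
    rw [traversals_zero]
    intro v
    rfl
  | succ n ih =>
    by_cases h : (G.run o d n).1 = d
    · rwa [run_succ_of_eq _ _ _ _ h, traversals_succ_of_eq _ _ _ _ h]
    · rw [run_succ_of_ne _ _ _ _ h, traversals_succ_of_ne _ _ _ _ h]
      exact ih.flip _

end Run

end SwitchGraph

open SwitchGraph

theorem stmt3_general {V : Type} [Fintype V] [DecidableEq V] (G : SwitchGraph V) (o d : V)
    (N : ℕ) (hN : (G.run o d N).1 = d) :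
    G.IsSwitchingFlow o d (G.traversals o d N) := by
  have hflow := G.isUnitFlow_traversals o d N
  rw [hN] at hflow
  refine ⟨hflow, fun v => ?_⟩
  have hv := G.recordsParity_traversals o d N v
  cases hs : (G.run o d N).2 v <;> simp only [hs, Bool.toNat_false, Bool.toNat_true] at hv <;> omega

/-- If the run terminates at `d`, its run profile is a switching flow. -/
theorem stmt3 {V : Type} [Fintype V] [DecidableEq V] (G : SwitchGraph V) (o d : V)
    (hod : o ≠ d) (N : ℕ) (hN : (G.run o d N).1 = d) :
    G.IsSwitchingFlow o d (G.traversals o d N) :=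
  stmt3_general G o d N hN
end

section
/- If the run from o to d does not terminate, then the run eventually reaches a dead end, i.e., a vertex from which no directed path to d exists in (V, E). -/
/-!
A non-terminating run never stops at `d`, so it is just the iteration of `step`. Some vertex
is visited infinitely often since `V` is finite. Between two consecutive visits of a vertex its
switch is untouched, and each visit flips it, so a vertex visited infinitely often is left
infinitely often along each of its two edges: the set of such vertices is closed under
successors. So if such a vertex could reach `d`, the run would visit `d`; hence it is a dead end.
-/

open scoped Classical

open Filter

namespace SwitchGraph

variable {V : Type}

lemma stepRel_iff_exists_succ (G : SwitchGraph V) {v w : V} :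
    G.stepRel v w ↔ ∃ b, G.succ v b = w := by
  simp [stepRel, succ]

variable [DecidableEq V] (G : SwitchGraph V)

lemma run_eq_iterate_step {o d : V} (h : ¬ G.Terminates o d) (n : ℕ) :
    G.run o d n = G.step^[n] (o, fun _ => false) := by
  induction n with
  | zero => rfl
  | succ n ih =>
    have hn : (G.run o d n).1 ≠ d := fun hd => h ⟨n, hd⟩
    rw [run, Function.iterate_succ_apply', ← run, if_neg hn, ih, Function.iterate_succ_apply']

lemma iterate_step_succ_fst (p : V × (V → Bool)) (n : ℕ) :
    (G.step^[n + 1] p).1 = G.succ (G.step^[n] p).1 ((G.step^[n] p).2 (G.step^[n] p).1) := by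
  rw [Function.iterate_succ_apply']
  rfl

lemma iterate_step_succ_snd (p : V × (V → Bool)) (n : ℕ) (v : V) :
    (G.step^[n + 1] p).2 v =
      if v = (G.step^[n] p).1 then !(G.step^[n] p).2 v else (G.step^[n] p).2 v := by
  rw [Function.iterate_succ_apply']
  simp only [step, Function.update_apply]
  split_ifs with hv <;> simp only [hv]

lemma iterate_step_snd_add_of_forall_ne (p : V × (V → Bool)) (a : ℕ) {v : V} :
    ∀ m, (∀ k, a ≤ k → k < a + m → (G.step^[k] p).1 ≠ v) →
      (G.step^[a + m] p).2 v = (G.step^[a] p).2 v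
  | 0, _ => rfl
  | m + 1, hne => by
    rw [← add_assoc, iterate_step_succ_snd, if_neg (hne (a + m) (by omega) (by omega)).symm,
      iterate_step_snd_add_of_forall_ne p a m fun k hk hkm => hne k hk (by omega)]

lemma iterate_step_snd_flip_of_forall_ne (p : V × (V → Bool)) {n m : ℕ}
    (hbetween : ∀ k, n + 1 ≤ k → k < n + 1 + m → (G.step^[k] p).1 ≠ (G.step^[n] p).1) :
    (G.step^[n + 1 + m] p).2 (G.step^[n] p).1 = !(G.step^[n] p).2 (G.step^[n] p).1 := by
  rw [iterate_step_snd_add_of_forall_ne G p (n + 1) m hbetween, iterate_step_succ_snd, if_pos rfl]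

lemma frequently_iterate_step_snd_eq {p : V × (V → Bool)} {v : V}
    (hv : ∃ᶠ n in atTop, (G.step^[n] p).1 = v) (b : Bool) :
    ∃ᶠ n in atTop, (G.step^[n] p).1 = v ∧ (G.step^[n] p).2 v = b := by
  rw [frequently_atTop] at hv ⊢
  intro N
  obtain ⟨n, hNn, rfl⟩ := hv N
  have hnext : ∃ m, (G.step^[n + 1 + m] p).1 = (G.step^[n] p).1 := by
    obtain ⟨k, hk, hkv⟩ := hv (n + 1)
    exact ⟨k - (n + 1), by rwa [Nat.add_sub_cancel' hk]⟩
  have hflip := G.iterate_step_snd_flip_of_forall_ne p (n := n) (m := Nat.find hnext)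
    fun k hk hkm hkv => Nat.find_min hnext (m := k - (n + 1)) (by omega)
      (by rwa [Nat.add_sub_cancel' hk])
  by_cases hb : (G.step^[n] p).2 (G.step^[n] p).1 = b
  · exact ⟨n, hNn, rfl, hb⟩
  · refine ⟨n + 1 + Nat.find hnext, by omega, Nat.find_spec hnext, ?_⟩
    rw [hflip]
    cases b <;> simpa using hb

lemma frequently_iterate_step_fst_of_stepRel {p : V × (V → Bool)} {v w : V}
    (hv : ∃ᶠ n in atTop, (G.step^[n] p).1 = v) (hvw : G.stepRel v w) :
    ∃ᶠ n in atTop, (G.step^[n] p).1 = w := by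
  obtain ⟨b, rfl⟩ := G.stepRel_iff_exists_succ.mp hvw
  have hvb := frequently_atTop.mp (G.frequently_iterate_step_snd_eq hv b)
  refine frequently_atTop.mpr fun N => ?_
  obtain ⟨n, hNn, rfl, hb⟩ := hvb N
  exact ⟨n + 1, by omega, by rw [iterate_step_succ_fst, hb]⟩

lemma frequently_iterate_step_fst_of_reflTransGen {p : V × (V → Bool)} {v w : V}
    (hv : ∃ᶠ n in atTop, (G.step^[n] p).1 = v) (hvw : Relation.ReflTransGen G.stepRel v w) :
    ∃ᶠ n in atTop, (G.step^[n] p).1 = w := by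
  induction hvw with
  | refl => exact hv
  | tail _ hstep ih => exact G.frequently_iterate_step_fst_of_stepRel ih hstep

lemma exists_frequently_iterate_step_fst_eq [Finite V] (p : V × (V → Bool)) :
    ∃ v, ∃ᶠ n in atTop, (G.step^[n] p).1 = v := by
  obtain ⟨v, hv⟩ := Finite.exists_infinite_fiber fun n => (G.step^[n] p).1
  exact ⟨v, Nat.frequently_atTop_iff_infinite.mpr (Set.infinite_coe_iff.mp hv)⟩

end SwitchGraph

open SwitchGraph

theorem stmt10_general {V : Type} [Fintype V] [DecidableEq V] (G : SwitchGraph V) (o d : V)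
    (h : ¬ G.Terminates o d) :
    ∃ N, G.DeadEnd d (G.run o d N).1 := by
  obtain ⟨v, hv⟩ := G.exists_frequently_iterate_step_fst_eq (o, fun _ => false)
  obtain ⟨N, hN⟩ := hv.exists
  refine ⟨N, fun hpath => ?_⟩
  rw [G.run_eq_iterate_step h, hN] at hpath
  obtain ⟨n, hn⟩ := (G.frequently_iterate_step_fst_of_reflTransGen hv hpath).exists
  exact h ⟨n, by rwa [G.run_eq_iterate_step h]⟩

/-- If the run does not terminate, it eventually reaches a dead end. -/
theorem stmt10 {V : Type} [Fintype V] [DecidableEq V] (G : SwitchGraph V) (o d : V)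
    (hod : o ≠ d) (h : ¬ G.Terminates o d) :
    ∃ N, G.DeadEnd d (G.run o d N).1 :=
  stmt10_general G o d h
end
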